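/- Let DMU_o = (x_o,y_o), o ∈ J, be FDH_V-efficient. Then Right-CRS prevails at DMU_o if and only if σ_o^+ = 1. -/

import Mathlib

open Set

noncomputable section

/-- The FDH variable-returns-to-scale technology:
`T = {(x,y) : y ≥ 0 and ∃ j, x_j ≤ x and y ≤ y_j}`. -/
def FDH {n m s : ℕ} (x : Fin n → Fin m → ℝ) (y : Fin n → Fin s → ℝ) :
    Set ((Fin m → ℝ) × (Fin s → ℝ)) :=
  {p | (∀ r, 0 ≤ p.2 r) ∧ ∃ j : Fin n, (∀ i, x j i ≤ p.1 i) ∧ (∀ r, p.2 r ≤ y j r)}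

/-- DMU_o is FDH_V-efficient: no (x,y) ∈ T with x ≤ x_o, y ≥ y_o, (x,y) ≠ (x_o,y_o). -/
def FDHEfficient {n m s : ℕ} (x : Fin n → Fin m → ℝ) (y : Fin n → Fin s → ℝ)
    (o : Fin n) : Prop :=
  ¬ ∃ p ∈ FDH x y, (∀ i, p.1 i ≤ x o i) ∧ (∀ r, y o r ≤ p.2 r) ∧ p ≠ (x o, y o)

/-- `α_{jo} = max_i x_{ij} / x_{io}`. -/
def alphaRatio {n m s : ℕ} (x : Fin n → Fin m → ℝ) (_y : Fin n → Fin s → ℝ)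
    (o j : Fin n) : ℝ :=
  ⨆ i : Fin m, x j i / x o i

/-- `β_{jo} = min_r y_{rj} / y_{ro}`. -/
def betaRatio {n m s : ℕ} (_x : Fin n → Fin m → ℝ) (y : Fin n → Fin s → ℝ)
    (o j : Fin n) : ℝ :=
  ⨅ r : Fin s, y j r / y o r

/-- `θ_o(D) = inf {θ : ∃ j ∈ J, δ ∈ D, δ x_j ≤ θ x_o, δ y_j ≥ y_o}`. -/
def thetaEff {n m s : ℕ} (x : Fin n → Fin m → ℝ) (y : Fin n → Fin s → ℝ)
    (o : Fin n) (D : Set ℝ) : ℝ :=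
  sInf {θ : ℝ | ∃ j : Fin n, ∃ δ ∈ D,
    (∀ i, δ * x j i ≤ θ * x o i) ∧ (∀ r, y o r ≤ δ * y j r)}

/-- G-IRS prevails at DMU_o iff `θ_o^{ND} > θ_o^{C} = θ_o^{NI}`. -/
def GIRS {n m s : ℕ} (x : Fin n → Fin m → ℝ) (y : Fin n → Fin s → ℝ)
    (o : Fin n) : Prop :=
  thetaEff x y o (Ici 1) > thetaEff x y o (Ici 0) ∧
    thetaEff x y o (Ici 0) = thetaEff x y o (Icc 0 1)

/-- G-DRS prevails at DMU_o iff `θ_o^{NI} > θ_o^{C} = θ_o^{ND}`. -/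
def GDRS {n m s : ℕ} (x : Fin n → Fin m → ℝ) (y : Fin n → Fin s → ℝ)
    (o : Fin n) : Prop :=
  thetaEff x y o (Icc 0 1) > thetaEff x y o (Ici 0) ∧
    thetaEff x y o (Ici 0) = thetaEff x y o (Ici 1)

/-- G-CRS prevails at DMU_o iff `θ_o^{C} = θ_o^{NI} = θ_o^{ND} = 1`. -/
def GCRS {n m s : ℕ} (x : Fin n → Fin m → ℝ) (y : Fin n → Fin s → ℝ)
    (o : Fin n) : Prop :=
  thetaEff x y o (Ici 0) = 1 ∧ thetaEff x y o (Icc 0 1) = 1 ∧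
    thetaEff x y o (Ici 1) = 1

/-- G-SCRS prevails at DMU_o iff `θ_o^{C} = θ_o^{NI} = θ_o^{ND} < 1`. -/
def GSCRS {n m s : ℕ} (x : Fin n → Fin m → ℝ) (y : Fin n → Fin s → ℝ)
    (o : Fin n) : Prop :=
  thetaEff x y o (Ici 0) = thetaEff x y o (Icc 0 1) ∧
    thetaEff x y o (Icc 0 1) = thetaEff x y o (Ici 1) ∧
    thetaEff x y o (Ici 1) < 1

/-- Response function `β_o(α) = sup {β : (α x_o, β y_o) ∈ T}`. -/
def respFun {n m s : ℕ} (x : Fin n → Fin m → ℝ) (y : Fin n → Fin s → ℝ)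
    (o : Fin n) (α : ℝ) : ℝ :=
  sSup {β : ℝ | ((fun i => α * x o i), (fun r => β * y o r)) ∈ FDH x y}

/-- Maximum incremental ratio `σ_o^+ = sup_{α > 1} (β_o(α) - 1)/(α - 1)`. -/
def sigmaPlus {n m s : ℕ} (x : Fin n → Fin m → ℝ) (y : Fin n → Fin s → ℝ)
    (o : Fin n) : ℝ :=
  sSup {ρ : ℝ | ∃ α : ℝ, 1 < α ∧ ρ = (respFun x y o α - 1) / (α - 1)}

/-- Minimum decremental ratio `σ_o^- = inf {(β_o(α)-1)/(α-1) : α < 1 feasible}`,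
taken in the extended reals (so it is `+∞` when no `α < 1` is feasible). -/
def sigmaMinus {n m s : ℕ} (x : Fin n → Fin m → ℝ) (y : Fin n → Fin s → ℝ)
    (o : Fin n) : EReal :=
  sInf {ρ : EReal | ∃ α : ℝ, α < 1 ∧
    (∃ β : ℝ, ((fun i => α * x o i), (fun r => β * y o r)) ∈ FDH x y) ∧
    ρ = (((respFun x y o α - 1) / (α - 1) : ℝ) : EReal)}

/-- Right-IRS: `(δ x_o, δ y_o) ∈ int T` for some `δ > 1`. -/
def RightIRS {n m s : ℕ} (x : Fin n → Fin m → ℝ) (y : Fin n → Fin s → ℝ)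
    (o : Fin n) : Prop :=
  ∃ δ : ℝ, 1 < δ ∧
    ((fun i => δ * x o i), (fun r => δ * y o r)) ∈ interior (FDH x y)

/-- Right-DRS: `(δ x_o, δ y_o) ∉ T` for every `δ > 1`. -/
def RightDRS {n m s : ℕ} (x : Fin n → Fin m → ℝ) (y : Fin n → Fin s → ℝ)
    (o : Fin n) : Prop :=
  ∀ δ : ℝ, 1 < δ →
    ((fun i => δ * x o i), (fun r => δ * y o r)) ∉ FDH x y

/-- Right-CRS: neither Right-IRS nor Right-DRS. -/
def RightCRS {n m s : ℕ} (x : Fin n → Fin m → ℝ) (y : Fin n → Fin s → ℝ)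
    (o : Fin n) : Prop :=
  ¬ RightIRS x y o ∧ ¬ RightDRS x y o

/-- Left-IRS: `(δ x_o, δ y_o) ∉ T` for every `δ ∈ (0,1)`. -/
def LeftIRS {n m s : ℕ} (x : Fin n → Fin m → ℝ) (y : Fin n → Fin s → ℝ)
    (o : Fin n) : Prop :=
  ∀ δ : ℝ, 0 < δ → δ < 1 →
    ((fun i => δ * x o i), (fun r => δ * y o r)) ∉ FDH x y

/-- Left-DRS: `(δ x_o, δ y_o) ∈ int T` for some `δ ∈ (0,1)`. -/
def LeftDRS {n m s : ℕ} (x : Fin n → Fin m → ℝ) (y : Fin n → Fin s → ℝ)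
    (o : Fin n) : Prop :=
  ∃ δ : ℝ, 0 < δ ∧ δ < 1 ∧
    ((fun i => δ * x o i), (fun r => δ * y o r)) ∈ interior (FDH x y)

/-- Left-CRS: neither Left-IRS nor Left-DRS. -/
def LeftCRS {n m s : ℕ} (x : Fin n → Fin m → ℝ) (y : Fin n → Fin s → ℝ)
    (o : Fin n) : Prop :=
  ¬ LeftIRS x y o ∧ ¬ LeftDRS x y o

/-! With `α_j := alphaRatio x y o j` and `β_j := betaRatio x y o j`, the point `(α x_o, β y_o)` lies
in `T` exactly when `0 ≤ β ≤ β_j` and `α_j ≤ α` for some `j`, so `β_o` is the upper envelope of the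
steps `β_j · 1[α ≥ α_j]`. Right-IRS then says that some step with `β_j > 1` lies strictly above
the diagonal, `α_j < β_j`, and Right-DRS that every such step lies strictly below it. On the
other hand the slope `(β_o(α) - 1)/(α - 1)` is largest at the left end `α = α_j` of a step, where
it is `(β_j - 1)/(α_j - 1)`; efficiency forces `α_j > 1` whenever `β_j > 1`. Hence `σ_o^+ ≤ 1`
iff no step lies above the diagonal, and `σ_o^+ ≥ 1` iff some step with `β_j > 1` reaches it. -/

open Topology

section ScaledTechnology

variable {n m s : ℕ} {x : Fin n → Fin m → ℝ} {y : Fin n → Fin s → ℝ} {o j : Fin n} {α β : ℝ}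

theorem alphaRatio_le_iff [NeZero m] (hxo : ∀ i, 0 < x o i) :
    alphaRatio x y o j ≤ α ↔ ∀ i, x j i ≤ α * x o i := by
  rw [alphaRatio, ciSup_le_iff (Finite.bddAbove_range _)]
  exact forall_congr' fun i => div_le_iff₀ (hxo i)

theorem le_betaRatio_iff [NeZero s] (hyo : ∀ r, 0 < y o r) :
    β ≤ betaRatio x y o j ↔ ∀ r, β * y o r ≤ y j r := by
  rw [betaRatio, le_ciInf_iff (Finite.bddBelow_range _)]
  exact forall_congr' fun r => le_div_iff₀ (hyo r)

theorem alphaRatio_self [NeZero m] (hxo : ∀ i, 0 < x o i) : alphaRatio x y o o = 1 := by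
  simp [alphaRatio, fun i => (hxo i).ne']

theorem betaRatio_self [NeZero s] (hyo : ∀ r, 0 < y o r) : betaRatio x y o o = 1 := by
  simp [betaRatio, fun r => (hyo r).ne']

theorem scaled_mem_FDH_iff [NeZero m] [NeZero s] (hxo : ∀ i, 0 < x o i)
    (hyo : ∀ r, 0 < y o r) :
    ((fun i => α * x o i), (fun r => β * y o r)) ∈ FDH x y ↔
      0 ≤ β ∧ ∃ j, alphaRatio x y o j ≤ α ∧ β ≤ betaRatio x y o j := by
  simp only [FDH, mem_ofPred_eq, alphaRatio_le_iff hxo, le_betaRatio_iff hyo]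
  refine and_congr_left fun _ => ⟨fun h => ?_, fun hβ r => mul_nonneg hβ (hyo r).le⟩
  exact nonneg_of_mul_nonneg_left (h 0) (hyo 0)

theorem one_lt_alphaRatio_of_one_lt_betaRatio [NeZero m] [NeZero s] (hxo : ∀ i, 0 < x o i)
    (hy : ∀ j r, 0 < y j r) (heff : FDHEfficient x y o)
    (hβ : 1 < betaRatio x y o j) : 1 < alphaRatio x y o j := by
  by_contra! hα
  have hxj : ∀ i, x j i ≤ x o i := by simpa using (alphaRatio_le_iff hxo).1 hα
  have hyj : ∀ r, y o r ≤ y j r := by simpa using (le_betaRatio_iff (hy o)).1 hβ.le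
  refine heff ⟨(x j, y j), ⟨fun r => (hy j r).le, j, fun _ => le_rfl, fun _ => le_rfl⟩,
    hxj, hyj, fun hj => ?_⟩
  have : betaRatio x y o j = betaRatio x y o o := by simp only [betaRatio, (Prod.mk.inj hj).2]
  exact hβ.ne' (this.trans (betaRatio_self (hy o)))

theorem betaRatio_nonneg (hy : ∀ j r, 0 < y j r) : 0 ≤ betaRatio x y o j :=
  Real.iInf_nonneg fun r => (div_pos (hy j r) (hy o r)).le

theorem le_respFun [NeZero m] [NeZero s] (hxo : ∀ i, 0 < x o i) (hy : ∀ j r, 0 < y j r)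
    (hj : alphaRatio x y o j ≤ α) : betaRatio x y o j ≤ respFun x y o α := by
  refine le_csSup ⟨⨆ k, betaRatio x y o k, ?_⟩ ?_
  · rintro β hβ
    obtain ⟨-, k, -, hk⟩ := (scaled_mem_FDH_iff hxo (hy o)).1 hβ
    exact hk.trans (le_ciSup (Finite.bddAbove_range _) k)
  · exact (scaled_mem_FDH_iff hxo (hy o)).2 ⟨betaRatio_nonneg hy, j, hj, le_rfl⟩

theorem respFun_le [NeZero m] [NeZero s] (hxo : ∀ i, 0 < x o i) (hyo : ∀ r, 0 < y o r)
    (hα : 1 ≤ α) {t : ℝ} (h : ∀ j, alphaRatio x y o j ≤ α → betaRatio x y o j ≤ t) :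
    respFun x y o α ≤ t := by
  have hmem : (0 : ℝ) ∈ {β | ((fun i => α * x o i), (fun r => β * y o r)) ∈ FDH x y} :=
    (scaled_mem_FDH_iff hxo hyo).2
      ⟨le_rfl, o, (alphaRatio_self hxo).trans_le hα, (betaRatio_self hyo).ge.trans' zero_le_one⟩
  refine csSup_le ⟨0, hmem⟩ fun β hβ => ?_
  obtain ⟨-, j, hjα, hjβ⟩ := (scaled_mem_FDH_iff hxo hyo).1 hβ
  exact hjβ.trans (h j hjα)

theorem rightIRS_iff [NeZero m] [NeZero s] (hxo : ∀ i, 0 < x o i) (hyo : ∀ r, 0 < y o r) :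
    RightIRS x y o ↔
      ∃ j, 1 < betaRatio x y o j ∧ alphaRatio x y o j < betaRatio x y o j := by
  constructor
  · rintro ⟨δ, hδ, hint⟩
    -- stepping slightly off the diagonal inside `T` gives `α_j ≤ δ - t < δ + t ≤ β_j`
    let ray : ℝ → (Fin m → ℝ) × (Fin s → ℝ) := fun t =>
      ((fun i => (δ - t) * x o i), (fun r => (δ + t) * y o r))
    have hray : ContinuousAt ray 0 := by fun_prop
    have hnhds : ray ⁻¹' FDH x y ∈ 𝓝 (0 : ℝ) :=
      hray.preimage_mem_nhds (by simpa [ray] using mem_interior_iff_mem_nhds.1 hint)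
    obtain ⟨t, hmem, ht⟩ := Filter.nonempty_of_mem
      (Filter.inter_mem (mem_nhdsWithin_of_mem_nhds hnhds) (self_mem_nhdsWithin (s := Ioi 0)))
    obtain ⟨-, j, hjα, hjβ⟩ := (scaled_mem_FDH_iff hxo hyo).1 hmem
    exact ⟨j, by linarith [mem_Ioi.1 ht], by linarith [mem_Ioi.1 ht]⟩
  · rintro ⟨j, hβ, hαβ⟩
    obtain ⟨δ, hmaxδ, hδβ⟩ := exists_between (max_lt hβ hαβ)
    obtain ⟨hδ, hαδ⟩ := max_lt_iff.1 hmaxδ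
    let box : Set ((Fin m → ℝ) × (Fin s → ℝ)) :=
      (univ.pi fun i => Ioi (x j i)) ×ˢ (univ.pi fun r => Ioo 0 (y j r))
    have hbox : box ⊆ FDH x y := by
      rintro ⟨u, v⟩ ⟨hu, hv⟩
      simp only [mem_pi, mem_univ, true_implies, mem_Ioi, mem_Ioo] at hu hv
      exact ⟨fun r => (hv r).1.le, j, fun i => (hu i).le, fun r => (hv r).2.le⟩
    have hopen : IsOpen box :=
      (isOpen_set_pi finite_univ fun _ _ => isOpen_Ioi).prod
        (isOpen_set_pi finite_univ fun _ _ => isOpen_Ioo)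
    refine ⟨δ, hδ, interior_maximal hbox hopen ⟨fun i _ => ?_, fun r _ => ⟨?_, ?_⟩⟩⟩
    · calc x j i ≤ alphaRatio x y o j * x o i := (alphaRatio_le_iff hxo).1 le_rfl i
        _ < δ * x o i := mul_lt_mul_of_pos_right hαδ (hxo i)
    · exact mul_pos (by linarith) (hyo r)
    · calc δ * y o r < betaRatio x y o j * y o r := mul_lt_mul_of_pos_right hδβ (hyo r)
        _ ≤ y j r := (le_betaRatio_iff hyo).1 le_rfl r

theorem rightDRS_iff [NeZero m] [NeZero s] (hxo : ∀ i, 0 < x o i) (hyo : ∀ r, 0 < y o r) :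
    RightDRS x y o ↔
      ∀ j, 1 < betaRatio x y o j → betaRatio x y o j < alphaRatio x y o j := by
  simp only [RightDRS, scaled_mem_FDH_iff hxo hyo]
  constructor
  · intro h j hβ
    by_contra! hαβ
    exact h _ hβ ⟨by linarith, j, hαβ, le_rfl⟩
  · rintro h δ hδ ⟨-, j, hα, hβ⟩
    linarith [h j (hδ.trans_le hβ)]

end ScaledTechnology

def slopeBound {n m s : ℕ} (x : Fin n → Fin m → ℝ) (y : Fin n → Fin s → ℝ) (o : Fin n) : ℝ :=
  Finset.univ.sup' ⟨o, Finset.mem_univ o⟩ fun j =>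
    if 1 < betaRatio x y o j then (betaRatio x y o j - 1) / (alphaRatio x y o j - 1) else 0

section IncrementalRatio

variable {n m s : ℕ} {x : Fin n → Fin m → ℝ} {y : Fin n → Fin s → ℝ} {o : Fin n} {α : ℝ}

theorem slopeBound_nonneg [NeZero s] (hyo : ∀ r, 0 < y o r) : 0 ≤ slopeBound x y o := by
  refine le_of_eq_of_le ?_ (Finset.le_sup' _ (Finset.mem_univ o))
  simp [betaRatio_self hyo]

theorem slope_le_slopeBound {j : Fin n} (hβ : 1 < betaRatio x y o j) :
    (betaRatio x y o j - 1) / (alphaRatio x y o j - 1) ≤ slopeBound x y o := by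
  have := Finset.le_sup' (fun k => if 1 < betaRatio x y o k then
    (betaRatio x y o k - 1) / (alphaRatio x y o k - 1) else 0) (Finset.mem_univ j)
  rwa [if_pos hβ] at this

theorem incrementalRatio_le_slopeBound [NeZero m] [NeZero s] (hxo : ∀ i, 0 < x o i)
    (hy : ∀ j r, 0 < y j r) (heff : FDHEfficient x y o) (hα : 1 < α) :
    (respFun x y o α - 1) / (α - 1) ≤ slopeBound x y o := by
  have hc := slopeBound_nonneg (x := x) (hy o)
  rw [div_le_iff₀ (sub_pos.2 hα)]
  suffices respFun x y o α ≤ slopeBound x y o * (α - 1) + 1 by linarith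
  refine respFun_le hxo (hy o) hα.le fun j hj => ?_
  by_cases hβ : 1 < betaRatio x y o j
  · have hαj := one_lt_alphaRatio_of_one_lt_betaRatio hxo hy heff hβ
    have hslope := slope_le_slopeBound hβ
    rw [div_le_iff₀ (sub_pos.2 hαj)] at hslope
    linarith [mul_le_mul_of_nonneg_left (sub_le_sub_right hj 1) hc]
  · linarith [mul_nonneg hc (sub_pos.2 hα).le]

theorem incrementalRatio_le_sigmaPlus [NeZero m] [NeZero s] (hxo : ∀ i, 0 < x o i)
    (hy : ∀ j r, 0 < y j r) (heff : FDHEfficient x y o) (hα : 1 < α) :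
    (respFun x y o α - 1) / (α - 1) ≤ sigmaPlus x y o := by
  refine le_csSup ⟨slopeBound x y o, ?_⟩ ⟨α, hα, rfl⟩
  rintro _ ⟨α', hα', rfl⟩
  exact incrementalRatio_le_slopeBound hxo hy heff hα'

theorem sigmaPlus_le {t : ℝ} (h : ∀ α, 1 < α → (respFun x y o α - 1) / (α - 1) ≤ t) :
    sigmaPlus x y o ≤ t := by
  refine csSup_le ⟨_, 2, one_lt_two, rfl⟩ ?_
  rintro _ ⟨α, hα, rfl⟩
  exact h α hα

theorem sigmaPlus_le_one_iff [NeZero m] [NeZero s] (hxo : ∀ i, 0 < x o i)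
    (hy : ∀ j r, 0 < y j r) (heff : FDHEfficient x y o) :
    sigmaPlus x y o ≤ 1 ↔ ¬ RightIRS x y o := by
  rw [rightIRS_iff hxo (hy o)]
  constructor
  · rintro hσ ⟨j, hβ, hαβ⟩
    have hαj := one_lt_alphaRatio_of_one_lt_betaRatio hxo hy heff hβ
    have hratio := (incrementalRatio_le_sigmaPlus hxo hy heff hαj).trans hσ
    rw [div_le_one (sub_pos.2 hαj)] at hratio
    linarith [le_respFun hxo hy le_rfl (j := j)]
  · intro hno
    refine sigmaPlus_le fun α hα => (div_le_one (sub_pos.2 hα)).2 ?_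
    suffices respFun x y o α ≤ α by linarith
    refine respFun_le hxo (hy o) hα.le fun j hj => ?_
    by_cases hβ : 1 < betaRatio x y o j
    · exact (not_lt.1 fun h => hno ⟨j, hβ, h⟩).trans hj
    · linarith

theorem one_le_sigmaPlus_iff [NeZero m] [NeZero s] (hxo : ∀ i, 0 < x o i)
    (hy : ∀ j r, 0 < y j r) (heff : FDHEfficient x y o) :
    1 ≤ sigmaPlus x y o ↔ ¬ RightDRS x y o := by
  rw [rightDRS_iff hxo (hy o)]
  constructor
  · intro hσ hdrs
    have hslope : slopeBound x y o < 1 := by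
      refine (Finset.sup'_lt_iff _).2 fun j _ => ?_
      split_ifs with hβ
      · have hαj := one_lt_alphaRatio_of_one_lt_betaRatio hxo hy heff hβ
        exact (div_lt_one (sub_pos.2 hαj)).2 (by linarith [hdrs j hβ])
      · exact zero_lt_one
    exact hσ.not_gt ((sigmaPlus_le fun _ hα =>
      incrementalRatio_le_slopeBound hxo hy heff hα).trans_lt hslope)
  · intro hdrs
    obtain ⟨j, hβ, hαβ⟩ :
        ∃ j, 1 < betaRatio x y o j ∧ alphaRatio x y o j ≤ betaRatio x y o j := by
      simpa using hdrs
    refine le_trans ?_ (incrementalRatio_le_sigmaPlus hxo hy heff hβ)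
    rw [one_le_div (sub_pos.2 hβ)]
    linarith [le_respFun hxo hy hαβ]

end IncrementalRatio

/-- Right-CRS at the FDH_V-efficient DMU_o iff `σ_o^+ = 1`. -/
theorem stmt12 {n m s : ℕ} (hm : 0 < m) (hs : 0 < s)
    (x : Fin n → Fin m → ℝ) (y : Fin n → Fin s → ℝ)
    (hx : ∀ j i, 0 < x j i) (hy : ∀ j r, 0 < y j r)
    (o : Fin n) (heff : FDHEfficient x y o) :
    RightCRS x y o ↔ sigmaPlus x y o = 1 := by
  have := NeZero.of_pos hm
  have := NeZero.of_pos hs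
  rw [RightCRS, le_antisymm_iff, sigmaPlus_le_one_iff (hx o) hy heff,
    one_le_sigmaPlus_iff (hx o) hy heff]
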